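/- Let H = (V, E) be a hypergraph, k ≥ 1, and G_k its conflict graph. For every independent set I of G_k, at least |I| edges of H are happy under the induced partial k-coloring f_I. -/

import Mathlib

open Finset

/-- Vertices of the conflict graph: triples `(e, v, c)` with `e ∈ E`, `v ∈ e`, `1 ≤ c ≤ k`. -/
abbrev ConflictVertex {V : Type*} [DecidableEq V] (E : Finset (Finset V)) (k : ℕ) :=
  {t : Finset V × V × ℕ // t.1 ∈ E ∧ t.2.1 ∈ t.1 ∧ 1 ≤ t.2.2 ∧ t.2.2 ≤ k}

/-- The conflict graph `G_k` of conflict-free `k`-coloring a hypergraph with edge set `E`. -/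
def conflictGraph {V : Type*} [DecidableEq V] (E : Finset (Finset V)) (k : ℕ) :
    SimpleGraph (ConflictVertex E k) where
  Adj x y := x ≠ y ∧
    ((x.1.2.1 = y.1.2.1 ∧ x.1.2.2 ≠ y.1.2.2) ∨ x.1.1 = y.1.1 ∨
     (x.1.2.2 = y.1.2.2 ∧
       (({x.1.2.1, y.1.2.1} : Finset V) ⊆ x.1.1 ∨ ({x.1.2.1, y.1.2.1} : Finset V) ⊆ y.1.1)))
  symm := by
    refine ⟨?_⟩
    rintro x y ⟨hne, h⟩
    refine ⟨hne.symm, ?_⟩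
    rcases h with ⟨h1, h2⟩ | h | ⟨h1, h2⟩
    · exact Or.inl ⟨h1.symm, h2.symm⟩
    · exact Or.inr (Or.inl h.symm)
    · refine Or.inr (Or.inr ⟨h1.symm, ?_⟩)
      rwa [Finset.pair_comm, or_comm] at h2
  loopless := ⟨fun x h => h.1 rfl⟩

/-- `I` is an independent set of the simple graph `G`. -/
def IsIndepSet {α : Type*} (G : SimpleGraph α) (I : Set α) : Prop :=
  I.Pairwise fun a b => ¬ G.Adj a b

/-- A partial `k`-coloring: every assigned color lies in `{1, …, k}` (`none` plays `⊥`). -/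
def IsPartialColoring {V : Type*} (f : V → Option ℕ) (k : ℕ) : Prop :=
  ∀ v c, f v = some c → 1 ≤ c ∧ c ≤ k

/-- An edge `e` is happy under the partial coloring `f`. -/
def Happy {V : Type*} (f : V → Option ℕ) (e : Finset V) : Prop :=
  ∃ v ∈ e, f v ≠ none ∧ ∀ u ∈ e, u ≠ v → f u ≠ f v

/-!
Proof idea: a triple `(e, v, c)` of an independent set `I` makes `e` happy under `f_I`,
witnessed by `v`: any other vertex `u ∈ e` colored `c` would come from a triple `(g, u, c) ∈ I`
adjacent to `(e, v, c)`, since `{u, v} ⊆ e`. Two triples of `I` with the same edge are adjacent,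
so `(e, v, c) ↦ e` is injective on `I`, and its image consists of happy edges.
-/

namespace conflictGraph

variable {V : Type*} [DecidableEq V] {E : Finset (Finset V)} {k : ℕ}

theorem adj_of_edge_eq {x y : ConflictVertex E k} (hne : x ≠ y) (h : x.1.1 = y.1.1) :
    (conflictGraph E k).Adj x y :=
  ⟨hne, Or.inr (Or.inl h)⟩

theorem adj_of_color_eq_of_mem {x y : ConflictVertex E k} (hne : x ≠ y)
    (hc : x.1.2.2 = y.1.2.2) (hy : y.1.2.1 ∈ x.1.1) :
    (conflictGraph E k).Adj x y :=
  ⟨hne, Or.inr (Or.inr ⟨hc, Or.inl (insert_subset x.2.2.1 (singleton_subset_iff.2 hy))⟩)⟩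

variable {I : Finset (ConflictVertex E k)}

theorem injOn_edge (hI : IsIndepSet (conflictGraph E k) ↑I) :
    Set.InjOn (fun x : ConflictVertex E k => x.1.1) ↑I := by
  intro x hx y hy hxy
  by_contra hne
  exact hI hx hy hne (adj_of_edge_eq hne hxy)

theorem happy_of_mem (hI : IsIndepSet (conflictGraph E k) ↑I) {f : V → Option ℕ}
    (hf : ∀ v c, f v = some c ↔ ∃ x ∈ I, x.1.2.1 = v ∧ x.1.2.2 = c)
    {x : ConflictVertex E k} (hx : x ∈ I) : Happy f x.1.1 := by
  have hfx : f x.1.2.1 = some x.1.2.2 := (hf _ _).2 ⟨x, hx, rfl, rfl⟩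
  refine ⟨x.1.2.1, x.2.2.1, by simp [hfx], fun u hu hne hfu => ?_⟩
  obtain ⟨y, hy, rfl, hyc⟩ := (hf u x.1.2.2).1 (hfu.trans hfx)
  have hxy : x ≠ y := by rintro rfl; exact hne rfl
  exact hI hx hy hxy (adj_of_color_eq_of_mem hxy hyc.symm hu)

end conflictGraph

theorem stmt7_general {V : Type*} [DecidableEq V]
    (E : Finset (Finset V)) (k : ℕ)
    (I : Finset (ConflictVertex E k)) (hI : IsIndepSet (conflictGraph E k) ↑I)
    (f : V → Option ℕ)
    (hf : ∀ v c, f v = some c ↔ ∃ x ∈ I, x.1.2.1 = v ∧ x.1.2.2 = c) :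
    I.card ≤ Set.ncard {e : Finset V | e ∈ E ∧ Happy f e} := by
  have hsub : ↑(I.image fun x => x.1.1) ⊆ {e : Finset V | e ∈ E ∧ Happy f e} := by
    intro e he
    obtain ⟨x, hx, rfl⟩ := Finset.mem_image.1 he
    exact ⟨x.2.1, conflictGraph.happy_of_mem hI hf hx⟩
  calc I.card = (I.image fun x => x.1.1).card :=
        (Finset.card_image_of_injOn (conflictGraph.injOn_edge hI)).symm
    _ = Set.ncard (↑(I.image fun x => x.1.1) : Set (Finset V)) := (Set.ncard_coe_finset _).symm
    _ ≤ _ := Set.ncard_le_ncard hsub (Set.toFinite _)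

/-- For every independent set `I` of the conflict graph, at least `|I|` edges
of `H` are happy under the induced partial coloring. -/
theorem stmt7 {V : Type*} [Fintype V] [DecidableEq V]
    (E : Finset (Finset V)) (hE : ∀ e ∈ E, e.Nonempty) (k : ℕ) (hk : 1 ≤ k)
    (I : Finset (ConflictVertex E k)) (hI : IsIndepSet (conflictGraph E k) ↑I)
    (f : V → Option ℕ)
    (hf : ∀ v c, f v = some c ↔ ∃ x ∈ I, x.1.2.1 = v ∧ x.1.2.2 = c) :
    I.card ≤ Set.ncard {e : Finset V | e ∈ E ∧ Happy f e} :=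
  stmt7_general E k I hI f hf
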